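/- arXiv:2410.21869 — 2 statements merged into one kernel-verified Lean document; each statement's English description precedes it below -/
import Mathlib

section
/- (Theorem 1, case C2.) Under the cluster-centric DGP, suppose the triple (f, W, β) globally minimizes the DIET instance-discrimination objective L(f, W, β) among all continuous encoders f: R^D → R^d whose embeddings are unit-normalized, all (unconstrained) classification heads W with rows w_i, and all β > 0. Then: (a) h = f ∘ g is the restriction to S^{d-1} of an orthogonal linear map of R^d; (b) there exists a constant vector ψ ∈ R^d, independent of i, such that w_i = (κ/β) h(v_{𝒞(i)}) + ψ for every i ∈ I; and (c) for any i, j ∈ I with 𝒞(i) = 𝒞(j) one has w_i = w_j. -/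
open MeasureTheory Metric
open scoped RealInnerProductSpace BigOperators

/-- The uniform (surface) measure on the unit sphere of `ℝ^d`, obtained from the
Lebesgue measure on `EuclideanSpace ℝ (Fin d)`. -/
noncomputable def sphereUniform (d : ℕ) :
    Measure (Metric.sphere (0 : EuclideanSpace ℝ (Fin d)) 1) :=
  (volume : Measure (EuclideanSpace ℝ (Fin d))).toSphere

/-- A finite system of vectors is an *affine generator system* of `ℝ^d` if every vector
is a linear combination of the system with coefficients summing to `1`. -/
def IsAffineGenerator {d : ℕ} {ι : Type} [Fintype ι]
    (v : ι → EuclideanSpace ℝ (Fin d)) : Prop :=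
  ∀ x : EuclideanSpace ℝ (Fin d), ∃ α : ι → ℝ,
    (∑ c, α c = 1) ∧ x = ∑ c, α c • v c

/-- The DIET instance-discrimination objective
`L(f, W, β) = E_{(x,I)}[ −ln( exp(β⟨w_I, f(x)⟩) / Σ_j exp(β⟨w_j, f(x)⟩) ) ]`,
where the instance label is uniform on `Idx` and, conditionally on the label `i`, the
latent `z` is distributed on the unit sphere according to the von Mises–Fisher density
proportional to `exp (κ ⟪v (Cl i), z⟫)` with respect to the uniform (surface) measure,
and `x = g z`. -/
noncomputable def dietLoss (d D : ℕ) {Cset Idx : Type} [Fintype Idx]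
    (v : Cset → EuclideanSpace ℝ (Fin d)) (κ : ℝ) (Cl : Idx → Cset)
    (g : Metric.sphere (0 : EuclideanSpace ℝ (Fin d)) 1 → EuclideanSpace ℝ (Fin D))
    (f : EuclideanSpace ℝ (Fin D) → EuclideanSpace ℝ (Fin d))
    (w : Idx → EuclideanSpace ℝ (Fin d)) (β : ℝ) : ℝ :=
  (Fintype.card Idx : ℝ)⁻¹ * ∑ i : Idx,
    ((∫ z : Metric.sphere (0 : EuclideanSpace ℝ (Fin d)) 1,
        Real.exp (κ * ⟪v (Cl i), (z : EuclideanSpace ℝ (Fin d))⟫)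
        ∂(sphereUniform d))⁻¹ *
      ∫ z : Metric.sphere (0 : EuclideanSpace ℝ (Fin d)) 1,
        Real.exp (κ * ⟪v (Cl i), (z : EuclideanSpace ℝ (Fin d))⟫) *
          (- Real.log (Real.exp (β * ⟪w i, f (g z)⟫) /
            ∑ j : Idx, Real.exp (β * ⟪w j, f (g z)⟫)))
        ∂(sphereUniform d))

/-! The von Mises–Fisher normalizer does not depend on the mean direction (a reflection of the
sphere exchanges any two of them), so the DIET loss is, up to a positive factor, the integral over
the sphere of the cross-entropy between the softmax of the true logits `κ⟪v_{𝒞(i)}, z⟫` and the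
softmax of the model logits `β⟪w_i, f(g z)⟫`. The competitor `f = g⁻¹` (extended continuously by
Tietze), `w_i = (κ/β) v_{𝒞(i)}` reproduces the true logits, so by Gibbs' inequality a global
minimizer must do so too, up to an additive constant, at every point of the sphere. Since the
`v_c` affinely span `ℝ^d`, this determines `z` linearly from `f(g z)`, and a linear left inverse of
a unit-norm map on the sphere is an orthogonal map. -/

open Real
open scoped Pointwise

section Softmax

variable {ι : Type*} [Fintype ι]

noncomputable def logSumExp (b : ι → ℝ) : ℝ := log (∑ j, exp (b j))

-- The weights `exp (a i)` are unnormalized: for `a i = κ⟪v_{𝒞(i)}, z⟫` they are the vMF densities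
-- up to the normalizer shared by all classes.
noncomputable def softmaxCrossEntropy (a b : ι → ℝ) : ℝ := ∑ i, exp (a i) * (logSumExp b - b i)

lemma neg_log_exp_div_sum_exp (b : ι → ℝ) (i : ι) :
    -log (exp (b i) / ∑ j, exp (b j)) = logSumExp b - b i := by
  have hpos : 0 < ∑ j, exp (b j) := Finset.sum_pos (fun j _ => exp_pos (b j)) ⟨i, Finset.mem_univ i⟩
  rw [log_div (exp_ne_zero _) hpos.ne', log_exp, logSumExp]
  ring

variable [Nonempty ι]

lemma exp_logSumExp (b : ι → ℝ) : exp (logSumExp b) = ∑ j, exp (b j) :=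
  exp_log (Finset.sum_pos (fun j _ => exp_pos (b j)) Finset.univ_nonempty)

@[fun_prop]
lemma continuous_logSumExp : Continuous (logSumExp : (ι → ℝ) → ℝ) :=
  (continuous_finsetSum _ fun j _ => continuous_exp.comp (continuous_apply j)).log
    fun b => (Finset.sum_pos (fun j _ => exp_pos (b j)) Finset.univ_nonempty).ne'

lemma sum_exp_mul_exp_sub_logSumExp (a b : ι → ℝ) :
    ∑ i, exp (a i) * exp ((logSumExp a - a i) - (logSumExp b - b i)) = ∑ i, exp (a i) := by
  have key : ∀ i, exp (a i) * exp ((logSumExp a - a i) - (logSumExp b - b i))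
      = exp (b i) * (exp (logSumExp a) / exp (logSumExp b)) := fun i => by
    rw [← exp_add, ← exp_sub, ← exp_add]; ring_nf
  rw [Finset.sum_congr rfl fun i _ => key i, ← Finset.sum_mul, ← exp_logSumExp b,
    mul_div_cancel₀ _ (exp_ne_zero _), exp_logSumExp]

lemma softmaxCrossEntropy_sub_self (a b : ι → ℝ) :
    softmaxCrossEntropy a b - softmaxCrossEntropy a a =
      ∑ i, exp (a i) * (exp (-((logSumExp b - b i) - (logSumExp a - a i))) - 1
        + ((logSumExp b - b i) - (logSumExp a - a i))) := by
  have h := sum_exp_mul_exp_sub_logSumExp a b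
  simp only [softmaxCrossEntropy, neg_sub, mul_add, mul_sub, mul_one, Finset.sum_add_distrib,
    Finset.sum_sub_distrib, h] at h ⊢
  ring

lemma exp_neg_sub_one_add_nonneg (t : ℝ) : 0 ≤ exp (-t) - 1 + t := by
  linarith [add_one_le_exp (-t)]

theorem softmaxCrossEntropy_self_le (a b : ι → ℝ) :
    softmaxCrossEntropy a a ≤ softmaxCrossEntropy a b := by
  rw [← sub_nonneg, softmaxCrossEntropy_sub_self]
  exact Finset.sum_nonneg fun i _ => mul_nonneg (exp_pos _).le (exp_neg_sub_one_add_nonneg _)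

theorem sub_eq_sub_of_softmaxCrossEntropy_eq {a b : ι → ℝ}
    (h : softmaxCrossEntropy a b = softmaxCrossEntropy a a) (i j : ι) :
    b i - b j = a i - a j := by
  rw [← sub_eq_zero, softmaxCrossEntropy_sub_self, Finset.sum_eq_zero_iff_of_nonneg
    fun i _ => mul_nonneg (exp_pos _).le (exp_neg_sub_one_add_nonneg _)] at h
  have hterm : ∀ k, logSumExp b - b k = logSumExp a - a k := fun k => by
    by_contra hk
    have := add_one_lt_exp (neg_ne_zero.mpr (sub_ne_zero.mpr hk))
    have := (mul_eq_zero.mp (h k (Finset.mem_univ k))).resolve_left (exp_ne_zero _)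
    linarith
  linarith [hterm i, hterm j]

theorem Continuous.softmaxCrossEntropy {X : Type*} [TopologicalSpace X] {a b : X → ι → ℝ}
    (ha : Continuous a) (hb : Continuous b) :
    Continuous fun x => softmaxCrossEntropy (a x) (b x) := by
  unfold _root_.softmaxCrossEntropy
  fun_prop

end Softmax

theorem Continuous.eq_zero_of_nonneg_of_integral_nonpos {X : Type*} [TopologicalSpace X]
    [CompactSpace X] [MeasurableSpace X] [OpensMeasurableSpace X] {μ : Measure X}
    [IsFiniteMeasure μ] [μ.IsOpenPosMeasure] {φ : X → ℝ} (hφ : Continuous φ) (h0 : 0 ≤ φ)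
    (hint : ∫ x, φ x ∂μ ≤ 0) : φ = 0 := by
  funext x
  by_contra hx
  exact (hφ.integral_pos_of_hasCompactSupport_nonneg_nonzero (.of_compactSpace φ) h0 hx).not_ge hint

theorem softmaxCrossEntropy_eq_of_integral_le {ι X : Type*} [Fintype ι] [Nonempty ι]
    [TopologicalSpace X] [CompactSpace X] [MeasurableSpace X] [OpensMeasurableSpace X]
    {μ : Measure X} [IsFiniteMeasure μ] [μ.IsOpenPosMeasure] {a b : X → ι → ℝ}
    (ha : Continuous a) (hb : Continuous b)
    (h : ∫ x, softmaxCrossEntropy (a x) (b x) ∂μ ≤ ∫ x, softmaxCrossEntropy (a x) (a x) ∂μ)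
    (x : X) : softmaxCrossEntropy (a x) (b x) = softmaxCrossEntropy (a x) (a x) := by
  have hab := ha.softmaxCrossEntropy hb
  have haa := ha.softmaxCrossEntropy ha
  have hgap := Continuous.eq_zero_of_nonneg_of_integral_nonpos (μ := μ)
    (φ := fun x => softmaxCrossEntropy (a x) (b x) - softmaxCrossEntropy (a x) (a x)) (hab.sub haa)
    (fun x => sub_nonneg.mpr (softmaxCrossEntropy_self_le (a x) (b x)))
    (by rw [integral_sub (hab.integrable_of_hasCompactSupport (.of_compactSpace _))
      (haa.integrable_of_hasCompactSupport (.of_compactSpace _))]; linarith)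
  exact sub_eq_zero.mp (congrFun hgap x)

section SphereMeasure

variable {E : Type*} [NormedAddCommGroup E] [NormedSpace ℝ E]

def LinearIsometryEquiv.sphereHomeomorph (O : E ≃ₗᵢ[ℝ] E) :
    sphere (0 : E) 1 ≃ₜ sphere (0 : E) 1 :=
  O.toHomeomorph.subtype fun x => by simp

variable [MeasurableSpace E] [BorelSpace E]

theorem MeasureTheory.MeasurePreserving.toSphere {μ : Measure E} {O : E ≃ₗᵢ[ℝ] E}
    (hO : MeasurePreserving O μ μ) :
    MeasurePreserving O.sphereHomeomorph μ.toSphere μ.toSphere := by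
  refine ⟨O.sphereHomeomorph.continuous.measurable, Measure.ext fun s hs => ?_⟩
  have hcone : Set.Ioo (0 : ℝ) 1 • ((↑) '' (O.sphereHomeomorph ⁻¹' s) : Set E)
      = O ⁻¹' (Set.Ioo (0 : ℝ) 1 • ((↑) '' s)) := by
    ext x
    constructor
    · rintro ⟨r, hr, _, ⟨z, hz, rfl⟩, rfl⟩
      exact ⟨r, hr, O z, ⟨_, hz, rfl⟩, (O.map_smul r z).symm⟩
    · rintro ⟨r, hr, _, ⟨z, hz, rfl⟩, hx⟩
      refine ⟨r, hr, O.symm z, ⟨O.sphereHomeomorph.symm z, by simpa using hz, rfl⟩, ?_⟩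
      rw [← O.symm_apply_apply x, ← hx, map_smul]
  rw [Measure.map_apply O.sphereHomeomorph.continuous.measurable hs,
    μ.toSphere_apply' hs, μ.toSphere_apply' (O.sphereHomeomorph.continuous.measurable hs), hcone]
  exact congrArg _
    (MeasurePreserving.measure_preimage_equiv (f := O.toHomeomorph.toMeasurableEquiv) hO _)

end SphereMeasure

universe u v w

theorem Continuous.exists_extension_of_injective {X : Type u} {Y : Type v} {Z : Type w}
    [TopologicalSpace X] [CompactSpace X] [TopologicalSpace Y] [T2Space Y] [NormalSpace Y]
    [TopologicalSpace Z] [TietzeExtension.{v, w} Z] {g : X → Y} (hg : Continuous g)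
    (hinj : Function.Injective g) (φ : C(X, Z)) : ∃ F : C(Y, Z), ∀ x, F (g x) = φ x := by
  obtain ⟨F, hF⟩ := φ.exists_extension' (hg.isClosedEmbedding hinj)
  exact ⟨F, congrFun hF⟩

section LinearAlgebra

variable {E : Type*} [NormedAddCommGroup E] [NormedSpace ℝ E]

theorem exists_mem_sphere_norm_smul_eq {x : E} (hx : x ≠ 0) :
    ∃ z ∈ sphere (0 : E) 1, ‖x‖ • z = x :=
  ⟨‖x‖⁻¹ • x, by simp [norm_smul, hx], smul_inv_smul₀ (norm_ne_zero_iff.mpr hx) x⟩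

theorem span_sphere_zero_one : Submodule.span ℝ (sphere (0 : E) 1) = ⊤ := by
  refine Submodule.eq_top_iff'.mpr fun x => ?_
  rcases eq_or_ne x 0 with rfl | hx
  · exact Submodule.zero_mem _
  · obtain ⟨z, hz, hxz⟩ := exists_mem_sphere_norm_smul_eq hx
    rw [← hxz]
    exact Submodule.smul_mem _ _ (Submodule.subset_span hz)

theorem exists_linearIsometryEquiv_of_leftInverse_on_sphere [FiniteDimensional ℝ E]
    {h : sphere (0 : E) 1 → E} (hh : ∀ z, ‖h z‖ = 1) (T : E →ₗ[ℝ] E) (hT : ∀ z, T (h z) = z) :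
    ∃ O : E ≃ₗᵢ[ℝ] E, ∀ z, h z = O z := by
  have hsurj : Function.Surjective T := by
    rw [← LinearMap.range_eq_top, eq_top_iff, ← span_sphere_zero_one, Submodule.span_le]
    exact fun z hz => ⟨h ⟨z, hz⟩, hT ⟨z, hz⟩⟩
  set e := LinearEquiv.ofBijective T ⟨LinearMap.injective_iff_surjective.mpr hsurj, hsurj⟩
  have he : ∀ z : sphere (0 : E) 1, e.symm z = h z := fun z => e.symm_apply_eq.mpr (hT z).symm
  refine ⟨{ e.symm with norm_map' := fun x => ?_ }, fun z => (he z).symm⟩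
  rcases eq_or_ne x 0 with rfl | hx
  · simp
  · obtain ⟨z, hz, hxz⟩ := exists_mem_sphere_norm_smul_eq hx
    conv_lhs => rw [← hxz]
    rw [map_smul, norm_smul, he ⟨z, hz⟩, hh, norm_norm, mul_one]

end LinearAlgebra

section AffineGenerator

variable {d : ℕ} {ι : Type} [Fintype ι] {v : ι → EuclideanSpace ℝ (Fin d)}

theorem IsAffineGenerator.eq_zero_of_forall_inner_eq (hv : IsAffineGenerator v)
    {z : EuclideanSpace ℝ (Fin d)} (h : ∀ c c', ⟪v c, z⟫ = ⟪v c', z⟫) : z = 0 := by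
  obtain ⟨α, -, hαz⟩ := hv z
  obtain ⟨γ, hγ1, hγ0⟩ := hv 0
  have hvz : ∀ c, ⟪v c, z⟫ = 0 := fun c => calc
    ⟪v c, z⟫ = ∑ c', γ c' * ⟪v c', z⟫ := by
      simp only [← h c, ← Finset.sum_mul, hγ1, one_mul]
    _ = ⟪(0 : EuclideanSpace ℝ (Fin d)), z⟫ := by simp [hγ0, sum_inner, real_inner_smul_left]
    _ = 0 := inner_zero_left _
  rw [← inner_self_eq_zero (𝕜 := ℝ)]
  nth_rw 1 [hαz]
  simp [sum_inner, real_inner_smul_left, hvz]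

theorem IsAffineGenerator.exists_linearIsometryEquiv {Idx : Type} (hv : IsAffineGenerator v)
    {Cl : Idx → ι} (hCl : Function.Surjective Cl)
    {h : sphere (0 : EuclideanSpace ℝ (Fin d)) 1 → EuclideanSpace ℝ (Fin d)} (hh : ∀ z, ‖h z‖ = 1)
    (u : Idx → EuclideanSpace ℝ (Fin d))
    (hu : ∀ z i j, ⟪u i - u j, h z⟫ = ⟪v (Cl i) - v (Cl j), (z : EuclideanSpace ℝ (Fin d))⟫) :
    ∃ O : EuclideanSpace ℝ (Fin d) ≃ₗᵢ[ℝ] EuclideanSpace ℝ (Fin d),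
      (∀ z, h z = O z) ∧ ∀ i j, u i - u j = O (v (Cl i) - v (Cl j)) := by
  let P := LinearMap.pi fun p : Idx × Idx => innerₛₗ ℝ (v (Cl p.1) - v (Cl p.2))
  let U := LinearMap.pi fun p : Idx × Idx => innerₛₗ ℝ (u p.1 - u p.2)
  have hUP : ∀ z, U (h z) = P z := fun z => funext fun p => hu z p.1 p.2
  have hP : LinearMap.ker P = ⊥ := by
    refine LinearMap.ker_eq_bot'.mpr fun z hz => hv.eq_zero_of_forall_inner_eq fun c c' => ?_
    obtain ⟨⟨i, rfl⟩, ⟨j, rfl⟩⟩ := And.intro (hCl c) (hCl c')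
    simpa [P, inner_sub_left, sub_eq_zero] using congrFun hz (i, j)
  obtain ⟨P', hP'⟩ := P.exists_leftInverse_of_injective hP
  obtain ⟨O, hO⟩ := exists_linearIsometryEquiv_of_leftInverse_on_sphere hh (P' ∘ₗ U)
    fun z => by rw [LinearMap.comp_apply, hUP, ← LinearMap.comp_apply, hP', LinearMap.id_apply]
  refine ⟨O, hO, fun i j => ext_inner_right ℝ <| LinearMap.congr_fun
    (f := innerₛₗ ℝ (u i - u j)) (g := innerₛₗ ℝ (O (v (Cl i) - v (Cl j))))
    (LinearMap.ext_on span_sphere_zero_one fun y hy => ?_)⟩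
  have hz : O.symm y ∈ sphere (0 : EuclideanSpace ℝ (Fin d)) 1 := by simpa using hy
  calc ⟪u i - u j, y⟫ = ⟪v (Cl i) - v (Cl j), O.symm y⟫ := by
        simpa [hO] using hu ⟨O.symm y, hz⟩ i j
    _ = ⟪O (v (Cl i) - v (Cl j)), y⟫ := by rw [← O.inner_map_map, O.apply_symm_apply]

end AffineGenerator

section DIET

variable {d : ℕ}

local notation "ℝᵈ" => EuclideanSpace ℝ (Fin d)
local notation "𝕊" => sphere (0 : EuclideanSpace ℝ (Fin d)) 1

instance : IsFiniteMeasure (sphereUniform d) := by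
  unfold sphereUniform; infer_instance

instance : (sphereUniform d).IsOpenPosMeasure := by
  unfold sphereUniform; infer_instance

lemma Continuous.integrable_sphereUniform {φ : 𝕊 → ℝ} (hφ : Continuous φ) :
    Integrable φ (sphereUniform d) :=
  hφ.integrable_of_hasCompactSupport (.of_compactSpace φ)

noncomputable def vmfNormalizer (d : ℕ) (κ : ℝ) (u : EuclideanSpace ℝ (Fin d)) : ℝ :=
  ∫ z : sphere (0 : EuclideanSpace ℝ (Fin d)) 1, exp (κ * ⟪u, (z : EuclideanSpace ℝ (Fin d))⟫)
    ∂sphereUniform d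

lemma vmfNormalizer_eq_of_norm_eq (κ : ℝ) {u u' : ℝᵈ} (h : ‖u‖ = ‖u'‖) :
    vmfNormalizer d κ u = vmfNormalizer d κ u' := by
  set O := (ℝ ∙ (u - u'))ᗮ.reflection
  have hmp : MeasurePreserving O.sphereHomeomorph.toMeasurableEquiv
      (sphereUniform d) (sphereUniform d) :=
    O.measurePreserving.toSphere
  rw [vmfNormalizer, vmfNormalizer,
    ← hmp.integral_comp' fun z : 𝕊 => exp (κ * ⟪u', (z : ℝᵈ)⟫), ← Submodule.reflection_sub h]
  congr with z
  exact congrArg (exp <| κ * ·) (O.inner_map_map u z).symm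

lemma vmfNormalizer_pos [Nontrivial ℝᵈ] (κ : ℝ) (u : ℝᵈ) : 0 < vmfNormalizer d κ u :=
  haveI : NeZero (sphereUniform d) := ⟨Measure.toSphere_ne_zero _⟩
  integral_exp_pos
    (by fun_prop : Continuous fun z : 𝕊 => exp (κ * ⟪u, (z : ℝᵈ)⟫)).integrable_sphereUniform

variable {D : ℕ} {Cset Idx : Type} [Fintype Idx] {v : Cset → EuclideanSpace ℝ (Fin d)} {κ : ℝ}
  {Cl : Idx → Cset} {g : sphere (0 : EuclideanSpace ℝ (Fin d)) 1 → EuclideanSpace ℝ (Fin D)}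

lemma dietLoss_eq_integral_softmaxCrossEntropy (hv : ∀ c, ‖v c‖ = 1) {u : ℝᵈ} (hu : ‖u‖ = 1)
    {f : EuclideanSpace ℝ (Fin D) → ℝᵈ} (hfg : Continuous fun z => f (g z)) (w : Idx → ℝᵈ)
    (β : ℝ) :
    dietLoss d D v κ Cl g f w β = (Fintype.card Idx * vmfNormalizer d κ u)⁻¹ *
      ∫ z, softmaxCrossEntropy (fun i => κ * ⟪v (Cl i), (z : ℝᵈ)⟫)
        (fun i => β * ⟪w i, f (g z)⟫) ∂sphereUniform d := by
  have hZ : ∀ i, vmfNormalizer d κ (v (Cl i)) = vmfNormalizer d κ u := fun i =>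
    vmfNormalizer_eq_of_norm_eq κ (by rw [hv, hu])
  have hb : Continuous fun (z : 𝕊) (j : Idx) => β * ⟪w j, f (g z)⟫ :=
    continuous_pi fun j => continuous_const.mul (continuous_const.inner hfg)
  have hint : ∀ i, Integrable (fun z : 𝕊 => exp (κ * ⟪v (Cl i), (z : ℝᵈ)⟫) *
      (logSumExp (fun j => β * ⟪w j, f (g z)⟫) - β * ⟪w i, f (g z)⟫)) (sphereUniform d) :=
    fun i => by
      have : Nonempty Idx := ⟨i⟩
      exact Continuous.integrable_sphereUniform <| (by fun_prop : Continuous fun z : 𝕊 =>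
        exp (κ * ⟪v (Cl i), (z : ℝᵈ)⟫)).mul ((continuous_logSumExp.comp hb).sub
          ((continuous_apply i).comp hb))
  simp only [dietLoss, softmaxCrossEntropy, integral_finsetSum _ fun i _ => hint i, mul_inv,
    mul_assoc, Finset.mul_sum]
  congr! 2 with i
  rw [← hZ i, vmfNormalizer]
  congr! 3 with z
  exact congrArg _ (neg_log_exp_div_sum_exp (fun j => β * ⟪w j, f (g z)⟫) i)

theorem dietLoss_minimizer_logit_sub_eq (hv : ∀ c, ‖v c‖ = 1) (hg_cont : Continuous g)
    (hg_inj : Function.Injective g) {f : EuclideanSpace ℝ (Fin D) → ℝᵈ} (hf_cont : Continuous f)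
    {w : Idx → ℝᵈ} {β : ℝ} (hβ : β ≠ 0)
    (hmin : ∀ (f' : EuclideanSpace ℝ (Fin D) → ℝᵈ) (w' : Idx → ℝᵈ), Continuous f' →
      (∀ z : 𝕊, ‖f' (g z)‖ = 1) → dietLoss d D v κ Cl g f w β ≤ dietLoss d D v κ Cl g f' w' β)
    (z : 𝕊) (i j : Idx) :
    β * ⟪w i, f (g z)⟫ - β * ⟪w j, f (g z)⟫ =
      κ * ⟪v (Cl i), (z : ℝᵈ)⟫ - κ * ⟪v (Cl j), (z : ℝᵈ)⟫ := by
  have : Nonempty Idx := ⟨i⟩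
  have : Nontrivial ℝᵈ := nontrivial_of_ne (v (Cl i)) 0 (norm_ne_zero_iff.mp (by simp [hv]))
  obtain ⟨F, hF⟩ := hg_cont.exists_extension_of_injective hg_inj ⟨((↑) : 𝕊 → ℝᵈ), by fun_prop⟩
  have hF' : ∀ z, F (g z) = (z : ℝᵈ) := hF
  have hcompare := hmin F (fun i => (κ / β) • v (Cl i)) F.continuous (fun z => by simp [hF'])
  rw [dietLoss_eq_integral_softmaxCrossEntropy hv (hv (Cl i)) (hf_cont.comp hg_cont),
    dietLoss_eq_integral_softmaxCrossEntropy hv (hv (Cl i))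
      (by simpa [hF'] using continuous_subtype_val)] at hcompare
  simp only [hF', real_inner_smul_left, ← mul_assoc, mul_div_cancel₀ _ hβ] at hcompare
  have hgibbs := softmaxCrossEntropy_eq_of_integral_le (by fun_prop) (by fun_prop)
    (le_of_mul_le_mul_left hcompare (by positivity [vmfNormalizer_pos κ (v (Cl i))])) z
  exact sub_eq_sub_of_softmaxCrossEntropy_eq hgibbs i j

end DIET

/-- **Theorem 1, case C2.** If `(f, W, β)` globally minimizes the DIET objective among all
continuous encoders with unit-normalized embeddings, all (unconstrained) heads and all
positive temperatures, then `f ∘ g` is the restriction of an orthogonal map `O`, the rows of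
`W` satisfy `w i = (κ/β) O v_{𝒞(i)} + ψ` for a constant vector `ψ`, and rows belonging to
the same class coincide. -/
theorem diet_identifiability_C2
    {d D : ℕ} {Cset Idx : Type} [Fintype Cset] [Fintype Idx]
    (v : Cset → EuclideanSpace ℝ (Fin d))
    (hv_norm : ∀ c, ‖v c‖ = 1)
    (hv_gen : IsAffineGenerator v)
    (Cl : Idx → Cset) (hCl : Function.Surjective Cl)
    (κ : ℝ) (hκ : 0 < κ)
    (g : Metric.sphere (0 : EuclideanSpace ℝ (Fin d)) 1 → EuclideanSpace ℝ (Fin D))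
    (hg_cont : Continuous g) (hg_inj : Function.Injective g)
    (f : EuclideanSpace ℝ (Fin D) → EuclideanSpace ℝ (Fin d))
    (w : Idx → EuclideanSpace ℝ (Fin d)) (β : ℝ)
    (hf_cont : Continuous f)
    (hf_norm : ∀ z : Metric.sphere (0 : EuclideanSpace ℝ (Fin d)) 1, ‖f (g z)‖ = 1)
    (hβ : 0 < β)
    (hmin : ∀ (f' : EuclideanSpace ℝ (Fin D) → EuclideanSpace ℝ (Fin d))
      (w' : Idx → EuclideanSpace ℝ (Fin d)) (β' : ℝ), Continuous f' →
      (∀ z : Metric.sphere (0 : EuclideanSpace ℝ (Fin d)) 1, ‖f' (g z)‖ = 1) →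
      0 < β' →
      dietLoss d D v κ Cl g f w β ≤ dietLoss d D v κ Cl g f' w' β') :
    ∃ O : EuclideanSpace ℝ (Fin d) ≃ₗᵢ[ℝ] EuclideanSpace ℝ (Fin d),
      ∃ ψ : EuclideanSpace ℝ (Fin d),
      (∀ z : Metric.sphere (0 : EuclideanSpace ℝ (Fin d)) 1,
        f (g z) = O (z : EuclideanSpace ℝ (Fin d))) ∧
      (∀ i, w i = (κ / β) • O (v (Cl i)) + ψ) ∧
      (∀ i j, Cl i = Cl j → w i = w j) := by
  obtain ⟨c₀⟩ : Nonempty Cset := by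
    obtain ⟨α, hα, -⟩ := hv_gen 0
    by_contra hempty
    simp [not_nonempty_iff.mp hempty] at hα
  obtain ⟨i₀, -⟩ := hCl c₀
  have hlogit := dietLoss_minimizer_logit_sub_eq hv_norm hg_cont hg_inj hf_cont hβ.ne'
    fun f' w' hf' hf'_norm => hmin f' w' β hf' hf'_norm hβ
  obtain ⟨O, hO, hrow⟩ := hv_gen.exists_linearIsometryEquiv hCl hf_norm (fun i => (β / κ) • w i)
    fun z i j => by
      rw [← smul_sub, real_inner_smul_left, inner_sub_left, inner_sub_left]
      field_simp
      linarith [hlogit z i j]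
  have hw : ∀ i j, w i - w j = (κ / β) • O (v (Cl i) - v (Cl j)) := fun i j => by
    rw [← hrow, ← smul_sub, smul_smul, div_mul_div_comm, mul_comm κ, div_self (by positivity),
      one_smul]
  refine ⟨O, w i₀ - (κ / β) • O (v (Cl i₀)), hO, fun i => ?_, fun i j hij => ?_⟩
  · have hwi := hw i i₀
    rw [map_sub] at hwi
    linear_combination (norm := module) hwi
  · simpa [hij, sub_eq_zero] using hw i j
end

section
/- (Theorem 1, case C4.) Under the cluster-centric DGP, suppose the triple (f, W, β) globally minimizes the DIET instance-discrimination objective L(f, W, β) among all continuous encoders f: R^D → R^d and all classification heads W, with neither the embeddings f(x) nor the rows w_i unit-normalized, and all β > 0. Then: (a) there exists an invertible linear map A: R^d → R^d such that h = f ∘ g equals the restriction of (A^T)^{-1} to S^{d-1}, i.e., h is linear; (b) there exists a constant vector ψ ∈ R^d such that (β/κ) w_i = A v_{𝒞(i)} + ψ for every i ∈ I, i.e., the weight vectors identify the cluster vectors up to an affine linear transformation; and (c) for any i, j ∈ I with 𝒞(i) = 𝒞(j) one has w_i = w_j. -/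
/-!
Take the competitor `f₀ = g⁻¹` (extended continuously to `ℝ^D` by Tietze), head `w'ᵢ = v_{𝒞(i)}`
and temperature `κ`: its softmax at `x = g z` is exactly the posterior of the label given `z`.
All cluster vectors have unit norm, so by rotation invariance of the surface measure the vMF
normalisers coincide and the loss is one integral of a cross-entropy over the sphere. By Gibbs'
inequality the gap between the loss of `(f, W, β)` and that of the competitor is the integral of a
continuous nonnegative function, so global minimality forces it to vanish everywhere: the model
reproduces the posterior at every `z`. Equal softmaxes have equal logit differences, whence
`β ⟪wᵢ - wⱼ, h z⟫ = κ ⟪v_{𝒞(i)} - v_{𝒞(j)}, z⟫`. The differences of the cluster vectors span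
`ℝ^d`, so this identity defines a linear `S` with `S (h z) = z` on the sphere; `S` is onto, hence
invertible, and `A = Sᵀ` gives all three claims.
-/

open MeasureTheory Metric
open scoped RealInnerProductSpace BigOperators

open Real InformationTheory
open scoped Pointwise

section UnitSphereMeasure

variable {E : Type*} [NormedAddCommGroup E] [InnerProductSpace ℝ E]

def LinearIsometryEquiv.restrictUnitSphere (O : E ≃ₗᵢ[ℝ] E) :
    sphere (0 : E) 1 ≃ₜ sphere (0 : E) 1 :=
  O.toHomeomorph.subtype fun x => by simp

@[simp]
theorem LinearIsometryEquiv.coe_restrictUnitSphere (O : E ≃ₗᵢ[ℝ] E) (z : sphere (0 : E) 1) :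
    (O.restrictUnitSphere z : E) = O z := rfl

variable [FiniteDimensional ℝ E] [MeasurableSpace E] [BorelSpace E]

theorem LinearIsometryEquiv.measurePreserving_restrictUnitSphere (O : E ≃ₗᵢ[ℝ] E) :
    MeasurePreserving O.restrictUnitSphere (volume : Measure E).toSphere
      (volume : Measure E).toSphere := by
  have hmeas := O.restrictUnitSphere.measurable
  refine ⟨hmeas, Measure.ext fun s hs => ?_⟩
  rw [Measure.map_apply hmeas hs, Measure.toSphere_apply' _ (hs.preimage hmeas),
    Measure.toSphere_apply' _ hs]
  have himage : Set.Ioo (0 : ℝ) 1 • (Subtype.val '' (O.restrictUnitSphere ⁻¹' s)) =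
      O ⁻¹' (Set.Ioo (0 : ℝ) 1 • (Subtype.val '' s)) := by
    ext x
    simp only [Set.mem_smul, Set.mem_image, Set.mem_preimage]
    constructor
    · rintro ⟨r, hr, _, ⟨z, hz, rfl⟩, rfl⟩
      exact ⟨r, hr, _, ⟨_, hz, rfl⟩, by simp⟩
    · rintro ⟨r, hr, _, ⟨z, hz, rfl⟩, hx⟩
      refine ⟨r, hr, _, ⟨O.symm.restrictUnitSphere z, ?_, rfl⟩, ?_⟩
      · convert hz
        ext
        simp
      · rw [coe_restrictUnitSphere, ← map_smul, hx, symm_apply_apply]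
  rw [himage, O.measurePreserving.measure_preimage_emb O.toHomeomorph.measurableEmbedding]

theorem integral_toSphere_inner_congr {v v' : E} (h : ‖v‖ = ‖v'‖) (F : ℝ → ℝ) :
    ∫ z : sphere (0 : E) 1, F ⟪v, z⟫ ∂(volume : Measure E).toSphere =
      ∫ z : sphere (0 : E) 1, F ⟪v', z⟫ ∂(volume : Measure E).toSphere := by
  set O := Submodule.reflection (ℝ ∙ (v' - v))ᗮ
  have hO : O v' = v := Submodule.reflection_sub h.symm
  rw [← O.measurePreserving_restrictUnitSphere.integral_comp
    O.restrictUnitSphere.measurableEmbedding]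
  simp [← hO]

end UnitSphereMeasure

theorem Continuous.eq_zero_of_integral_nonpos {X : Type*} [TopologicalSpace X]
    [MeasurableSpace X] [OpensMeasurableSpace X] [CompactSpace X] {μ : Measure X}
    [IsFiniteMeasure μ] [μ.IsOpenPosMeasure] {G : X → ℝ} (hG : Continuous G) (hG0 : 0 ≤ G)
    (h : ∫ x, G x ∂μ ≤ 0) : G = 0 :=
  (hG.ae_eq_iff_eq μ continuous_const).1 <| (integral_eq_zero_iff_of_nonneg hG0
    (hG.integrable_of_hasCompactSupport (.of_compactSpace _))).1
      (le_antisymm h (integral_nonneg hG0))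

section Softmax

variable {ι : Type*} [Fintype ι]

noncomputable def softmax (x : ι → ℝ) (i : ι) : ℝ := exp (x i) / ∑ j, exp (x j)

noncomputable def crossEntropy (y x : ι → ℝ) : ℝ := ∑ i, exp (y i) * -log (softmax x i)

theorem sum_exp_pos (x : ι → ℝ) (i : ι) : 0 < ∑ j, exp (x j) :=
  Finset.sum_pos (fun j _ => exp_pos (x j)) ⟨i, Finset.mem_univ i⟩

theorem softmax_pos (x : ι → ℝ) (i : ι) : 0 < softmax x i :=
  div_pos (exp_pos _) (sum_exp_pos x i)

theorem sum_softmax [Nonempty ι] (x : ι → ℝ) : ∑ i, softmax x i = 1 := by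
  simp only [softmax]
  rw [← Finset.sum_div, div_self (sum_exp_pos x (Classical.arbitrary ι)).ne']

theorem log_softmax (x : ι → ℝ) (i : ι) : log (softmax x i) = x i - log (∑ j, exp (x j)) := by
  rw [softmax, log_div (exp_pos _).ne' (sum_exp_pos x i).ne', log_exp]

theorem sub_eq_sub_of_softmax_eq {x y : ι → ℝ} (h : softmax x = softmax y) (i j : ι) :
    x i - x j = y i - y j := by
  have hlog k : x k - log (∑ l, exp (x l)) = y k - log (∑ l, exp (y l)) := by
    rw [← log_softmax, ← log_softmax, h]
  linarith [hlog i, hlog j]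

theorem continuous_log_softmax (i : ι) : Continuous fun x : ι → ℝ => log (softmax x i) := by
  simp_rw [log_softmax]
  exact (continuous_apply i).sub <| (continuous_finsetSum _ fun j _ =>
    (continuous_apply j).rexp).log fun x => (sum_exp_pos x i).ne'

theorem continuous_crossEntropy :
    Continuous fun p : (ι → ℝ) × (ι → ℝ) => crossEntropy p.1 p.2 :=
  continuous_finsetSum _ fun i _ => ((continuous_apply i).comp continuous_fst).rexp.mul
    ((continuous_log_softmax i).comp continuous_snd).neg

theorem sum_mul_log_div_eq_sum_mul_klFun {p q : ι → ℝ} (hq : ∀ i, q i ≠ 0)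
    (hpq : ∑ i, p i = ∑ i, q i) :
    ∑ i, p i * log (p i / q i) = ∑ i, q i * klFun (p i / q i) := by
  have hterm i : q i * klFun (p i / q i) = p i * log (p i / q i) + (q i - p i) := by
    rw [klFun_apply, mul_sub, mul_add, ← mul_assoc, mul_div_cancel₀ _ (hq i), mul_one]
    ring
  simp_rw [hterm, Finset.sum_add_distrib, Finset.sum_sub_distrib, hpq, sub_self, add_zero]

theorem crossEntropy_sub_crossEntropy_self [Nonempty ι] (y x : ι → ℝ) :
    crossEntropy y x - crossEntropy y y =
      (∑ j, exp (y j)) * ∑ i, softmax x i * klFun (softmax y i / softmax x i) := by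
  have hexp i : exp (y i) = (∑ j, exp (y j)) * softmax y i := by
    rw [softmax, mul_div_cancel₀ _ (sum_exp_pos y i).ne']
  rw [← sum_mul_log_div_eq_sum_mul_klFun (fun i => (softmax_pos x i).ne')
    (by rw [sum_softmax, sum_softmax]), Finset.mul_sum, crossEntropy, crossEntropy,
    ← Finset.sum_sub_distrib]
  refine Finset.sum_congr rfl fun i _ => ?_
  rw [hexp, log_div (softmax_pos y i).ne' (softmax_pos x i).ne']
  ring

theorem softmax_mul_klFun_nonneg (y x : ι → ℝ) (i : ι) :
    0 ≤ softmax x i * klFun (softmax y i / softmax x i) :=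
  mul_nonneg (softmax_pos x i).le (klFun_nonneg (div_pos (softmax_pos y i) (softmax_pos x i)).le)

theorem crossEntropy_self_le [Nonempty ι] (y x : ι → ℝ) :
    crossEntropy y y ≤ crossEntropy y x := by
  rw [← sub_nonneg, crossEntropy_sub_crossEntropy_self]
  exact mul_nonneg (Finset.sum_nonneg fun i _ => (exp_pos _).le)
    (Finset.sum_nonneg fun i _ => softmax_mul_klFun_nonneg y x i)

theorem softmax_eq_of_crossEntropy_le [Nonempty ι] {y x : ι → ℝ}
    (h : crossEntropy y x ≤ crossEntropy y y) : softmax x = softmax y := by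
  have hzero : crossEntropy y x - crossEntropy y y = 0 :=
    le_antisymm (sub_nonpos.2 h) (sub_nonneg.2 (crossEntropy_self_le y x))
  rw [crossEntropy_sub_crossEntropy_self, mul_eq_zero,
    or_iff_right (sum_exp_pos y (Classical.arbitrary ι)).ne',
    Finset.sum_eq_zero_iff_of_nonneg fun i _ => softmax_mul_klFun_nonneg y x i] at hzero
  funext i
  have hi := hzero i (Finset.mem_univ i)
  rw [mul_eq_zero, or_iff_right (softmax_pos x i).ne',
    klFun_eq_zero_iff (div_pos (softmax_pos y i) (softmax_pos x i)).le,
    div_eq_one_iff_eq (softmax_pos x i).ne'] at hi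
  exact hi.symm

end Softmax

section LinearAlgebra

variable {E : Type*} [NormedAddCommGroup E] [InnerProductSpace ℝ E]

theorem span_range_coe_unitSphere :
    Submodule.span ℝ (Set.range ((↑) : sphere (0 : E) 1 → E)) = ⊤ := by
  refine eq_top_iff.2 fun x _ => ?_
  rcases eq_or_ne x 0 with rfl | hx
  · exact Submodule.zero_mem _
  have hz : ‖x‖⁻¹ • x ∈ sphere (0 : E) 1 := by simp [norm_smul, hx]
  rw [← smul_inv_smul₀ (norm_ne_zero_iff.2 hx) x]
  exact Submodule.smul_mem _ _ (Submodule.subset_span ⟨⟨_, hz⟩, rfl⟩)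

theorem ext_inner_unitSphere {x y : E} (h : ∀ z : sphere (0 : E) 1, ⟪x, z⟫ = ⟪y, z⟫) :
    x = y :=
  ext_inner_right ℝ fun u => LinearMap.congr_fun
    (LinearMap.ext_on_range (f := innerₗ E x) (g := innerₗ E y) span_range_coe_unitSphere h) u

variable [FiniteDimensional ℝ E]

theorem exists_linearMap_apply_eq_of_inner_eq {X ι : Type*} {p h : X → E} {b b' : ι → E}
    (hb : Submodule.span ℝ (Set.range b) = ⊤) (hbb' : ∀ c x, ⟪b c, p x⟫ = ⟪b' c, h x⟫) :
    ∃ S : E →ₗ[ℝ] E, ∀ x, S (h x) = p x := by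
  obtain ⟨R, hR⟩ := (Finsupp.linearCombination ℝ b).exists_rightInverse_of_surjective
    (by rw [Finsupp.range_linearCombination, hb])
  refine ⟨LinearMap.adjoint (Finsupp.linearCombination ℝ b' ∘ₗ R), fun x => ?_⟩
  refine ext_inner_left ℝ fun y => ?_
  have hy : Finsupp.linearCombination ℝ b (R y) = y := LinearMap.congr_fun hR y
  rw [LinearMap.adjoint_inner_right, LinearMap.comp_apply]
  conv_rhs => rw [← hy]
  simp [Finsupp.linearCombination_apply, Finsupp.sum, sum_inner, real_inner_smul_left, hbb']

theorem exists_linearEquiv_adjoint_eq {S : E →ₗ[ℝ] E} {h : sphere (0 : E) 1 → E}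
    (hS : ∀ z, S (h z) = z) : ∃ A : E ≃ₗ[ℝ] E, LinearMap.adjoint A.toLinearMap = S := by
  have hsurj : Function.Surjective S := by
    rw [← LinearMap.range_eq_top, eq_top_iff, ← span_range_coe_unitSphere, Submodule.span_le]
    rintro _ ⟨z, rfl⟩
    exact ⟨h z, hS z⟩
  set e := LinearEquiv.ofBijective S ⟨LinearMap.injective_iff_surjective.2 hsurj, hsurj⟩
  refine ⟨LinearEquiv.ofLinearMap (LinearMap.adjoint e.toLinearMap)
    (LinearMap.adjoint e.symm.toLinearMap) ?_ ?_, LinearMap.adjoint_adjoint S⟩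
  · rw [← LinearMap.adjoint_comp, e.symm_comp, LinearMap.adjoint_id]
  · rw [← LinearMap.adjoint_comp, e.comp_symm, LinearMap.adjoint_id]

theorem exists_linearEquiv_of_inner_sub_eq {ι : Type*} {h : sphere (0 : E) 1 → E}
    {u v : ι → E} {i₀ : ι} (hv : Submodule.span ℝ (Set.range fun i => v i - v i₀) = ⊤)
    (huv : ∀ z i, ⟪u i - u i₀, h z⟫ = ⟪v i - v i₀, z⟫) :
    ∃ A : E ≃ₗ[ℝ] E, ∃ ψ : E,
      (∀ z, LinearMap.adjoint A.toLinearMap (h z) = z) ∧ ∀ i, u i = A (v i) + ψ := by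
  obtain ⟨S, hS⟩ := exists_linearMap_apply_eq_of_inner_eq hv fun i z => (huv z i).symm
  obtain ⟨A, rfl⟩ := exists_linearEquiv_adjoint_eq hS
  refine ⟨A, u i₀ - A (v i₀), hS, fun i => ?_⟩
  have hsymm : A.symm (u i - u i₀) = v i - v i₀ := ext_inner_unitSphere fun z => by
    rw [← huv z i, ← hS z, LinearMap.adjoint_inner_right, LinearEquiv.coe_coe,
      A.apply_symm_apply]
  have hA := congrArg A hsymm
  rw [A.apply_symm_apply, map_sub] at hA
  linear_combination (norm := module) hA

end LinearAlgebra

theorem IsAffineGenerator.nonempty {d : ℕ} {ι : Type} [Fintype ι]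
    {v : ι → EuclideanSpace ℝ (Fin d)} (hv : IsAffineGenerator v) : Nonempty ι := by
  by_contra hempty
  obtain ⟨α, hα, -⟩ := hv 0
  simp [not_nonempty_iff.1 hempty] at hα

theorem IsAffineGenerator.span_range_sub_eq_top {d : ℕ} {ι : Type} [Fintype ι]
    {v : ι → EuclideanSpace ℝ (Fin d)} (hv : IsAffineGenerator v) (c₀ : ι) :
    Submodule.span ℝ (Set.range fun c => v c - v c₀) = ⊤ := by
  refine eq_top_iff.2 fun x _ => ?_
  obtain ⟨α, hα, hx⟩ := hv (x + v c₀)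
  have hsum : x = ∑ c, α c • (v c - v c₀) := by
    simp only [smul_sub, Finset.sum_sub_distrib, ← Finset.sum_smul, hα, one_smul, ← hx,
      add_sub_cancel_right]
  rw [hsum]
  exact Submodule.sum_mem _ fun c _ => Submodule.smul_mem _ _ (Submodule.subset_span ⟨c, rfl⟩)

universe u

theorem exists_continuous_comp_eq_of_injective {X : Type*} {Y : Type u} {Z : Type*}
    [TopologicalSpace X] [CompactSpace X] [TopologicalSpace Y] [T2Space Y] [NormalSpace Y]
    [TopologicalSpace Z] [TietzeExtension.{u} Z] {g : X → Y} (hg : Continuous g)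
    (hinj : Function.Injective g) {φ : X → Z} (hφ : Continuous φ) :
    ∃ F : Y → Z, Continuous F ∧ ∀ x, F (g x) = φ x := by
  obtain ⟨F, hF⟩ := ContinuousMap.exists_extension' (hg.isClosedEmbedding hinj) ⟨φ, hφ⟩
  exact ⟨F, F.continuous, congr_fun hF⟩

section Diet

variable {d D : ℕ} {Cset Idx : Type} [Fintype Idx] {v : Cset → EuclideanSpace ℝ (Fin d)}
  {κ : ℝ} {Cl : Idx → Cset}
  {g : sphere (0 : EuclideanSpace ℝ (Fin d)) 1 → EuclideanSpace ℝ (Fin D)}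
  {f : EuclideanSpace ℝ (Fin D) → EuclideanSpace ℝ (Fin d)}
  {w : Idx → EuclideanSpace ℝ (Fin d)} {β : ℝ}

instance sphereUniform.instIsFiniteMeasure (d : ℕ) : IsFiniteMeasure (sphereUniform d) := by
  unfold sphereUniform; infer_instance

instance sphereUniform.instIsOpenPosMeasure (d : ℕ) : (sphereUniform d).IsOpenPosMeasure := by
  unfold sphereUniform; infer_instance

theorem dietLoss_eq_integral {Z : ℝ}
    (hZ : ∀ c, ∫ z : sphere (0 : EuclideanSpace ℝ (Fin d)) 1, exp (κ * ⟪v c, z⟫)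
      ∂sphereUniform d = Z)
    (hfg : Continuous fun z => f (g z)) :
    dietLoss d D v κ Cl g f w β = ((Fintype.card Idx : ℝ) * Z)⁻¹ *
      ∫ z, crossEntropy (fun i => κ * ⟪v (Cl i), z⟫) (fun j => β * ⟪w j, f (g z)⟫)
        ∂sphereUniform d := by
  have hint i : Integrable (fun z : sphere (0 : EuclideanSpace ℝ (Fin d)) 1 =>
      exp (κ * ⟪v (Cl i), z⟫) * -log (softmax (fun j => β * ⟪w j, f (g z)⟫) i))
      (sphereUniform d) := by
    refine Continuous.integrable_of_hasCompactSupport ?_ (.of_compactSpace _)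
    exact (continuous_const.mul (continuous_const.inner continuous_subtype_val)).rexp.mul
      ((continuous_log_softmax i).comp (continuous_pi fun j =>
        continuous_const.mul (continuous_const.inner hfg))).neg
  simp only [crossEntropy]
  rw [integral_finsetSum _ fun i _ => hint i, mul_inv, mul_assoc, Finset.mul_sum]
  simp only [dietLoss, hZ]
  rfl

theorem integral_crossEntropy_le_of_dietLoss_le [Nonempty Idx]
    [Nonempty (sphere (0 : EuclideanSpace ℝ (Fin d)) 1)] (hv : ∀ c, ‖v c‖ = 1)
    {f₀ : EuclideanSpace ℝ (Fin D) → EuclideanSpace ℝ (Fin d)}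
    (hfg : Continuous fun z => f (g z)) (hf₀ : ∀ z, f₀ (g z) = z)
    (hle : dietLoss d D v κ Cl g f w β ≤ dietLoss d D v κ Cl g f₀ (fun i => v (Cl i)) κ) :
    ∫ z, crossEntropy (fun i => κ * ⟪v (Cl i), z⟫) (fun j => β * ⟪w j, f (g z)⟫)
        ∂sphereUniform d ≤
      ∫ z, crossEntropy (fun i => κ * ⟪v (Cl i), z⟫) (fun j => κ * ⟪v (Cl j), z⟫)
        ∂sphereUniform d := by
  obtain ⟨i⟩ := ‹Nonempty Idx›
  set Z := ∫ z : sphere (0 : EuclideanSpace ℝ (Fin d)) 1, exp (κ * ⟪v (Cl i), z⟫)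
    ∂sphereUniform d
  have hZ c : ∫ z : sphere (0 : EuclideanSpace ℝ (Fin d)) 1, exp (κ * ⟪v c, z⟫)
      ∂sphereUniform d = Z :=
    integral_toSphere_inner_congr (by rw [hv, hv]) fun t => exp (κ * t)
  have : NeZero (sphereUniform d) := ⟨(sphereUniform d).measure_univ_pos.1 <|
    isOpen_univ.measure_pos _ Set.univ_nonempty⟩
  have hZpos : 0 < Z := integral_exp_pos <|
    (continuous_const.mul (continuous_const.inner continuous_subtype_val)).rexp
      |>.integrable_of_hasCompactSupport (.of_compactSpace _)
  have hf₀g : Continuous fun z => f₀ (g z) := by simpa only [hf₀] using continuous_subtype_val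
  rw [dietLoss_eq_integral hZ hfg, dietLoss_eq_integral hZ hf₀g] at hle
  simp only [hf₀] at hle
  exact le_of_mul_le_mul_left hle (by positivity)

theorem logit_sub_eq_of_dietLoss_le (hv : ∀ c, ‖v c‖ = 1)
    {f₀ : EuclideanSpace ℝ (Fin D) → EuclideanSpace ℝ (Fin d)}
    (hfg : Continuous fun z => f (g z)) (hf₀ : ∀ z, f₀ (g z) = z)
    (hle : dietLoss d D v κ Cl g f w β ≤ dietLoss d D v κ Cl g f₀ (fun i => v (Cl i)) κ)
    (z : sphere (0 : EuclideanSpace ℝ (Fin d)) 1) (i j : Idx) :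
    β * ⟪w i - w j, f (g z)⟫ = κ * ⟪v (Cl i) - v (Cl j), z⟫ := by
  have : Nonempty Idx := ⟨i⟩
  have : Nonempty (sphere (0 : EuclideanSpace ℝ (Fin d)) 1) := ⟨z⟩
  set y := fun (z : sphere (0 : EuclideanSpace ℝ (Fin d)) 1) (k : Idx) => κ * ⟪v (Cl k), z⟫
  set x := fun (z : sphere (0 : EuclideanSpace ℝ (Fin d)) 1) (k : Idx) => β * ⟪w k, f (g z)⟫
  have hy : Continuous y := continuous_pi fun k =>
    continuous_const.mul (continuous_const.inner continuous_subtype_val)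
  have hx : Continuous x := continuous_pi fun k =>
    continuous_const.mul (continuous_const.inner hfg)
  have hyx : Continuous fun z => crossEntropy (y z) (x z) :=
    continuous_crossEntropy.comp (hy.prodMk hx)
  have hyy : Continuous fun z => crossEntropy (y z) (y z) :=
    continuous_crossEntropy.comp (hy.prodMk hy)
  have hgap : (fun z => crossEntropy (y z) (x z) - crossEntropy (y z) (y z)) = 0 := by
    refine Continuous.eq_zero_of_integral_nonpos (μ := sphereUniform d) (hyx.sub hyy)
      (fun z => sub_nonneg.2 (crossEntropy_self_le _ _)) ?_
    rw [integral_sub (hyx.integrable_of_hasCompactSupport (.of_compactSpace _))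
      (hyy.integrable_of_hasCompactSupport (.of_compactSpace _)), sub_nonpos]
    exact integral_crossEntropy_le_of_dietLoss_le hv hfg hf₀ hle
  have hsoftmax := softmax_eq_of_crossEntropy_le (sub_eq_zero.1 (congr_fun hgap z)).le
  rw [inner_sub_left, inner_sub_left, mul_sub, mul_sub]
  exact sub_eq_sub_of_softmax_eq hsoftmax i j

end Diet

/-- **Theorem 1, case C4.** If `(f, W, β)` globally minimizes the DIET objective among all
continuous encoders and all heads (neither embeddings nor rows unit-normalized) and all
positive temperatures, then `h = f ∘ g` is the restriction to the sphere of the linear map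
`(Aᵀ)⁻¹` for an invertible linear map `A` (i.e. `Aᵀ (h z) = z`), the rescaled rows satisfy
`(β/κ) w i = A v_{𝒞(i)} + ψ` for a constant vector `ψ`, and rows belonging to the same
class coincide. -/
theorem diet_identifiability_C4
    {d D : ℕ} {Cset Idx : Type} [Fintype Cset] [Fintype Idx]
    (v : Cset → EuclideanSpace ℝ (Fin d))
    (hv_norm : ∀ c, ‖v c‖ = 1)
    (hv_gen : IsAffineGenerator v)
    (Cl : Idx → Cset) (hCl : Function.Surjective Cl)
    (κ : ℝ) (hκ : 0 < κ)
    (g : Metric.sphere (0 : EuclideanSpace ℝ (Fin d)) 1 → EuclideanSpace ℝ (Fin D))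
    (hg_cont : Continuous g) (hg_inj : Function.Injective g)
    (f : EuclideanSpace ℝ (Fin D) → EuclideanSpace ℝ (Fin d))
    (w : Idx → EuclideanSpace ℝ (Fin d)) (β : ℝ)
    (hf_cont : Continuous f)
    (hβ : 0 < β)
    (hmin : ∀ (f' : EuclideanSpace ℝ (Fin D) → EuclideanSpace ℝ (Fin d))
      (w' : Idx → EuclideanSpace ℝ (Fin d)) (β' : ℝ), Continuous f' → 0 < β' →
      dietLoss d D v κ Cl g f w β ≤ dietLoss d D v κ Cl g f' w' β') :
    ∃ A : EuclideanSpace ℝ (Fin d) ≃ₗ[ℝ] EuclideanSpace ℝ (Fin d),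
      ∃ ψ : EuclideanSpace ℝ (Fin d),
      (∀ z : Metric.sphere (0 : EuclideanSpace ℝ (Fin d)) 1,
        LinearMap.adjoint (A.toLinearMap) (f (g z)) = (z : EuclideanSpace ℝ (Fin d))) ∧
      (∀ i, (β / κ) • w i = A (v (Cl i)) + ψ) ∧
      (∀ i j, Cl i = Cl j → w i = w j) := by
  obtain ⟨c₀⟩ := hv_gen.nonempty
  obtain ⟨i₀, -⟩ := hCl c₀
  obtain ⟨f₀, hf₀_cont, hf₀⟩ := exists_continuous_comp_eq_of_injective hg_cont hg_inj
    continuous_subtype_val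
  have hlogit := logit_sub_eq_of_dietLoss_le hv_norm (hf_cont.comp hg_cont) hf₀
    (hmin f₀ _ κ hf₀_cont hκ)
  have hspan : Submodule.span ℝ (Set.range fun i => v (Cl i) - v (Cl i₀)) = ⊤ := by
    rw [← hv_gen.span_range_sub_eq_top (Cl i₀), ← hCl.range_comp]
    rfl
  obtain ⟨A, ψ, hA, hw⟩ := exists_linearEquiv_of_inner_sub_eq (h := fun z => f (g z))
    (u := fun i => (β / κ) • w i) hspan fun z i => by
      rw [← smul_sub, real_inner_smul_left, div_mul_eq_mul_div, hlogit,
        mul_div_cancel_left₀ _ hκ.ne']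
  refine ⟨A, ψ, hA, hw, fun i j hij => smul_right_injective _ (div_pos hβ hκ).ne' ?_⟩
  simp only [hw, hij]
end
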